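/- Let X be a complex Banach space, let x : ℕ → X be a bounded sequence, and suppose G_x admits a boundary function F_x ∈ L¹_loc(𝕋∖{1}; X). Let ψ ∈ C₀(−π,π) be such that its Fourier coefficient sequence c_m = (1/2π) ∫_{−π}^{π} e^{imθ} ψ(θ) dθ satisfies ∑_{m∈ℤ} |c_m| < ∞. Then for every n ∈ ℤ, ∑_{j≥0} x_j c_{n−j} = (1/2π) ∫_{−π}^{π} e^{i(n+1)θ} ψ(θ) F_x(e^{iθ}) dθ; consequently ∑_{j≥0} x_j c_{n−j} → 0 as |n| → ∞. -/

import Mathlib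

open MeasureTheory Filter Set

/-- `Gx x` is the holomorphic function on `{λ : |λ| > 1}` given by
`Gx x λ = ∑_{n ≥ 0} x n / λ^(n+1)`. -/
noncomputable def Gx {X : Type*} [NormedAddCommGroup X] [NormedSpace ℂ X] (x : ℕ → X)
    (lam : ℂ) : X :=
  ∑' n : ℕ, (lam ^ (n + 1))⁻¹ • x n

/-- `ψ ∈ C₀(−π,π)`: continuous on `[−π,π]`, vanishing in a neighbourhood of `0`,
with `ψ(−π) = ψ(π)`. -/
def IsC0 (ψ : ℝ → ℂ) : Prop :=
  ContinuousOn ψ (Set.Icc (-Real.pi) Real.pi) ∧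
    (∃ δ > 0, ∀ θ : ℝ, |θ| < δ → ψ θ = 0) ∧ ψ (-Real.pi) = ψ Real.pi

/-- `F ∈ L¹_loc(𝕋∖{1}; X)`: for every `ψ ∈ C₀(−π,π)` the map
`θ ↦ ψ(θ) • F(e^{iθ})` is integrable on `(−π, π)`. -/
def MemL1loc {X : Type*} [NormedAddCommGroup X] [NormedSpace ℂ X] (F : ℂ → X) : Prop :=
  ∀ ψ : ℝ → ℂ, IsC0 ψ →
    IntervalIntegrable (fun θ : ℝ => ψ θ • F (Complex.exp (Complex.I * θ)))
      MeasureTheory.volume (-Real.pi) Real.pi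

/-- `F` is a boundary function for `Gx x`:
`lim_{r→1+} ∫_{−π}^{π} ψ(θ) Gx x (r e^{iθ}) dθ = ∫_{−π}^{π} ψ(θ) F(e^{iθ}) dθ`
for every `ψ ∈ C₀(−π,π)`. -/
def IsBoundaryFun {X : Type*} [NormedAddCommGroup X] [NormedSpace ℂ X] [CompleteSpace X]
    (x : ℕ → X) (F : ℂ → X) : Prop :=
  ∀ ψ : ℝ → ℂ, IsC0 ψ →
    Filter.Tendsto
      (fun r : ℝ =>
        ∫ θ in (-Real.pi)..Real.pi, ψ θ • Gx x ((r : ℂ) * Complex.exp (Complex.I * θ)))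
      (nhdsWithin 1 (Set.Ioi 1))
      (nhds (∫ θ in (-Real.pi)..Real.pi, ψ θ • F (Complex.exp (Complex.I * θ))))

open Topology

/-! For `r > 1` the series defining `Gx x (r e^{iθ})` is dominated by a geometric series uniformly
in `θ`, so integrating it term by term against `e^{i(n+1)θ} ψ(θ)` gives
`∑ⱼ r^{-(j+1)} 2π c_{n-j} x_j`. As `r → 1+` this tends to `2π ∑ⱼ c_{n-j} x_j` by dominated
convergence (`∑ |c_m| < ∞`, `x` bounded), while by the boundary-function property, applied to
`e^{i(n+1)θ} ψ ∈ C₀(−π,π)`, it tends to `∫ e^{i(n+1)θ} ψ(θ) F(e^{iθ}) dθ`. The decay in `n` is then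
the Riemann–Lebesgue lemma for `θ ↦ ψ(θ) F(e^{iθ})`. -/

lemma IsC0.exp_int_mul {ψ : ℝ → ℂ} (hψ : IsC0 ψ) (k : ℤ) :
    IsC0 (fun θ : ℝ => Complex.exp (Complex.I * k * θ) * ψ θ) := by
  obtain ⟨hcont, ⟨δ, hδ, hzero⟩, hend⟩ := hψ
  refine ⟨by fun_prop, ⟨δ, hδ, fun θ hθ => by simp [hzero θ hθ]⟩, ?_⟩
  simp only [hend]
  congr 1
  rw [Complex.exp_eq_exp_iff_exists_int]
  exact ⟨-k, by push_cast; ring⟩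

lemma summable_geometric_succ {q : ℝ} (h0 : 0 ≤ q) (h1 : q < 1) :
    Summable fun j : ℕ => q ^ (j + 1) :=
  (summable_nat_add_iff 1).mpr (summable_geometric_of_lt_one h0 h1)

section BoundedSequence

variable {X : Type*} [NormedAddCommGroup X] [NormedSpace ℂ X] {x : ℕ → X} {C : ℝ}

lemma norm_inv_pow_succ_smul_le (hx : ∀ n, ‖x n‖ ≤ C) (lam : ℂ) (j : ℕ) :
    ‖(lam ^ (j + 1))⁻¹ • x j‖ ≤ ‖lam‖⁻¹ ^ (j + 1) * C := by
  rw [norm_smul, norm_inv, norm_pow, inv_pow]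
  exact mul_le_mul_of_nonneg_left (hx j) (by positivity)

variable [CompleteSpace X]

lemma hasSum_Gx (hx : ∀ n, ‖x n‖ ≤ C) {lam : ℂ} (hlam : 1 < ‖lam‖) :
    HasSum (fun j : ℕ => (lam ^ (j + 1))⁻¹ • x j) (Gx x lam) :=
  (Summable.of_norm_bounded
    ((summable_geometric_succ (by positivity) (inv_lt_one_of_one_lt₀ hlam)).mul_right C)
    (norm_inv_pow_succ_smul_le hx lam)).hasSum

lemma norm_ofReal_mul_exp_I_mul {r : ℝ} (hr : 0 ≤ r) (θ : ℝ) :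
    ‖(r : ℂ) * Complex.exp (Complex.I * θ)‖ = r := by
  rw [norm_mul, mul_comm Complex.I, Complex.norm_exp_ofReal_mul_I, mul_one,
    Complex.norm_of_nonneg hr]

lemma hasSum_intervalIntegral_smul_Gx (hx : ∀ n, ‖x n‖ ≤ C) {φ : ℝ → ℂ} {a b : ℝ}
    (hφ : ContinuousOn φ (Set.uIcc a b)) {r : ℝ} (hr : 1 < r) :
    HasSum
      (fun j : ℕ => (∫ θ in a..b, φ θ * ((r * Complex.exp (Complex.I * θ)) ^ (j + 1))⁻¹) • x j)
      (∫ θ in a..b, φ θ • Gx x (r * Complex.exp (Complex.I * θ))) := by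
  obtain ⟨M, hM⟩ := isCompact_uIcc.exists_bound_of_continuousOn hφ
  have hnorm := norm_ofReal_mul_exp_I_mul (r := r) (by linarith)
  have hne (θ : ℝ) : (r : ℂ) * Complex.exp (Complex.I * θ) ≠ 0 :=
    norm_pos_iff.mp (by rw [hnorm]; linarith)
  have hcont (j : ℕ) : Continuous fun θ : ℝ => ((r * Complex.exp (Complex.I * θ)) ^ (j + 1))⁻¹ :=
    (by fun_prop : Continuous fun θ : ℝ => (r * Complex.exp (Complex.I * θ)) ^ (j + 1)).inv₀
      fun θ => pow_ne_zero _ (hne θ)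
  simp_rw [← intervalIntegral.integral_smul_const]
  refine intervalIntegral.hasSum_integral_of_dominated_convergence
    (fun j _ => M * (r⁻¹ ^ (j + 1) * C)) (fun j => ?_) (fun j => ?_) ?_ intervalIntegrable_const ?_
  · exact ((hφ.mono Set.uIoc_subset_uIcc).mul (hcont j).continuousOn).smul continuousOn_const
      |>.aestronglyMeasurable measurableSet_uIoc
  · refine ae_of_all _ fun θ hθ => ?_
    rw [mul_smul, norm_smul]
    have hj := norm_inv_pow_succ_smul_le hx (r * Complex.exp (Complex.I * θ)) j
    rw [hnorm] at hj
    exact mul_le_mul (hM θ (Set.uIoc_subset_uIcc hθ)) hj (norm_nonneg _)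
      ((norm_nonneg _).trans (hM θ (Set.uIoc_subset_uIcc hθ)))
  · exact ae_of_all _ fun θ _ =>
      ((summable_geometric_succ (by positivity) (inv_lt_one_of_one_lt₀ hr)).mul_right C).mul_left M
  · refine ae_of_all _ fun θ _ => ?_
    simpa only [mul_smul] using (hasSum_Gx hx (by rw [hnorm]; exact hr)).const_smul (φ θ)

lemma tendsto_tsum_inv_pow_succ_mul_smul (hx : ∀ n, ‖x n‖ ≤ C) {a : ℕ → ℂ}
    (ha : Summable fun j => ‖a j‖) :
    Tendsto (fun r : ℝ => ∑' j : ℕ, (((r : ℂ) ^ (j + 1))⁻¹ * a j) • x j) (𝓝[>] 1)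
      (𝓝 (∑' j : ℕ, a j • x j)) := by
  refine tendsto_tsum_of_dominated_convergence (bound := fun j => ‖a j‖ * C) (ha.mul_right C)
    (fun j => ?_) ?_
  · have : ContinuousAt (fun r : ℝ => (((r : ℂ) ^ (j + 1))⁻¹ * a j) • x j) 1 := by
      fun_prop (disch := simp)
    simpa using this.tendsto.mono_left nhdsWithin_le_nhds
  · filter_upwards [self_mem_nhdsWithin] with r (hr : 1 < r) j
    have hpow : ‖((r : ℂ) ^ (j + 1))⁻¹‖ ≤ 1 := by
      rw [norm_inv, norm_pow, Complex.norm_of_nonneg (by linarith)]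
      exact inv_le_one_of_one_le₀ (one_le_pow₀ hr.le)
    rw [norm_smul, norm_mul]
    calc ‖((r : ℂ) ^ (j + 1))⁻¹‖ * ‖a j‖ * ‖x j‖ ≤ 1 * ‖a j‖ * C := by gcongr; exact hx j
      _ = ‖a j‖ * C := by rw [one_mul]

end BoundedSequence

lemma intervalIntegral_exp_mul_mul_inv_pow (ψ : ℝ → ℂ) (a b : ℝ) (n : ℤ) (j : ℕ) (r : ℂ) :
    ∫ θ in a..b, Complex.exp (Complex.I * (n + 1) * θ) * ψ θ *
        ((r * Complex.exp (Complex.I * θ)) ^ (j + 1))⁻¹ =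
      (r ^ (j + 1))⁻¹ * ∫ θ in a..b, Complex.exp (Complex.I * ((n - j : ℤ) : ℂ) * θ) * ψ θ := by
  rw [← intervalIntegral.integral_const_mul]
  congr 1 with θ
  have hsplit : Complex.exp (Complex.I * (n + 1) * θ) =
      Complex.exp (Complex.I * ((n - j : ℤ) : ℂ) * θ) * Complex.exp (Complex.I * θ) ^ (j + 1) := by
    rw [← Complex.exp_nat_mul, ← Complex.exp_add]
    push_cast
    ring_nf
  rw [hsplit, mul_pow, mul_inv]
  field_simp

lemma tendsto_intervalIntegral_exp_mul_smul_cocompact {X : Type*} [NormedAddCommGroup X]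
    [NormedSpace ℂ X] (g : ℝ → X) {a b : ℝ} (hab : a ≤ b) :
    Tendsto (fun t : ℝ => ∫ θ in a..b, Complex.exp (Complex.I * t * θ) • g θ) (cocompact ℝ)
      (𝓝 0) := by
  have h2π : -(2 * Real.pi)⁻¹ ≠ 0 := by simp [Real.pi_ne_zero]
  refine ((Real.tendsto_integral_exp_smul_cocompact ((Set.Ioc a b).indicator g)).comp
    (tendsto_cocompact_mul_right₀ h2π)).congr fun t => ?_
  simp only [Function.comp_apply, intervalIntegral.integral_of_le hab,
    ← integral_indicator measurableSet_Ioc]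
  congr 1 with θ
  rw [Circle.smul_def, Real.fourierChar_apply, Set.indicator_smul_apply]
  congr 2
  push_cast
  field_simp

theorem IsBoundaryFun.tsum_smul_eq_intervalIntegral {X : Type*} [NormedAddCommGroup X]
    [NormedSpace ℂ X] [CompleteSpace X] {x : ℕ → X} {C : ℝ} (hx : ∀ n, ‖x n‖ ≤ C) {F : ℂ → X}
    (hFb : IsBoundaryFun x F) {ψ : ℝ → ℂ} (hψ : IsC0 ψ) {c : ℤ → ℂ}
    (hc : ∀ m : ℤ, c m =
      (1 / (2 * Real.pi)) * ∫ θ in (-Real.pi)..Real.pi, Complex.exp (Complex.I * m * θ) * ψ θ)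
    (hc_sum : Summable fun m : ℤ => ‖c m‖) (n : ℤ) :
    ∑' j : ℕ, c (n - (j : ℤ)) • x j =
      ((1 / (2 * Real.pi) : ℝ)) •
        ∫ θ in (-Real.pi)..Real.pi,
          (Complex.exp (Complex.I * (n + 1) * θ) * ψ θ) • F (Complex.exp (Complex.I * θ)) := by
  have hψn : IsC0 fun θ : ℝ => Complex.exp (Complex.I * (n + 1) * θ) * ψ θ := by
    simpa using hψ.exp_int_mul (n + 1)
  have hcoeff (m : ℤ) : ∫ θ in (-Real.pi)..Real.pi, Complex.exp (Complex.I * m * θ) * ψ θ =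
      2 * Real.pi * c m := by
    rw [hc]
    field_simp
  have hseries : ∀ᶠ r : ℝ in 𝓝[>] 1,
      ∫ θ in (-Real.pi)..Real.pi, (Complex.exp (Complex.I * (n + 1) * θ) * ψ θ) •
          Gx x ((r : ℂ) * Complex.exp (Complex.I * θ)) =
        ∑' j : ℕ, (((r : ℂ) ^ (j + 1))⁻¹ * (2 * Real.pi * c (n - j))) • x j := by
    filter_upwards [self_mem_nhdsWithin] with r (hr : 1 < r)
    rw [← (hasSum_intervalIntegral_smul_Gx hx
      (by rw [Set.uIcc_of_le (by linarith [Real.pi_pos])]; exact hψn.1) hr).tsum_eq]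
    simp_rw [intervalIntegral_exp_mul_mul_inv_pow, hcoeff]
  have hsummable : Summable fun j : ℕ => ‖2 * Real.pi * c (n - j)‖ :=
    ((hc_sum.comp_injective (sub_right_injective.comp Nat.cast_injective)).mul_left
      ‖(2 * Real.pi : ℂ)‖).congr fun j => (norm_mul _ _).symm
  have hlim := tendsto_nhds_unique (hFb _ hψn)
    ((tendsto_tsum_inv_pow_succ_mul_smul hx hsummable).congr' (EventuallyEq.symm hseries))
  have hfactor : ∑' j : ℕ, (2 * Real.pi * c (n - j)) • x j =
      (2 * Real.pi : ℂ) • ∑' j : ℕ, c (n - j) • x j := by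
    rw [← tsum_const_smul'']
    exact tsum_congr fun j => mul_smul _ _ _
  have hnormalize : ((1 / (2 * Real.pi) : ℝ)) • (2 * Real.pi : ℂ) = 1 := by
    rw [Complex.real_smul]
    push_cast
    field_simp
  rw [hlim, hfactor, ← smul_assoc, hnormalize, one_smul]

theorem stmt_14 {X : Type*} [NormedAddCommGroup X] [NormedSpace ℂ X] [CompleteSpace X]
    (x : ℕ → X) (hx_bdd : ∃ C : ℝ, ∀ n : ℕ, ‖x n‖ ≤ C)
    (F : ℂ → X) (hFb : IsBoundaryFun x F)
    (ψ : ℝ → ℂ) (hψ : IsC0 ψ) (c : ℤ → ℂ)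
    (hc : ∀ m : ℤ, c m =
      (1 / (2 * Real.pi)) * ∫ θ in (-Real.pi)..Real.pi, Complex.exp (Complex.I * m * θ) * ψ θ)
    (hc_sum : Summable (fun m : ℤ => ‖c m‖)) :
    (∀ n : ℤ, ∑' j : ℕ, c (n - (j : ℤ)) • x j =
      ((1 / (2 * Real.pi) : ℝ)) •
        ∫ θ in (-Real.pi)..Real.pi,
          (Complex.exp (Complex.I * (n + 1) * θ) * ψ θ) • F (Complex.exp (Complex.I * θ))) ∧
    Filter.Tendsto (fun n : ℤ => ∑' j : ℕ, c (n - (j : ℤ)) • x j)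
      Filter.cofinite (nhds 0) := by
  obtain ⟨C, hC⟩ := hx_bdd
  have hidentity := hFb.tsum_smul_eq_intervalIntegral hC hψ hc hc_sum
  refine ⟨hidentity, ?_⟩
  have hshift : Tendsto (fun n : ℤ => ((n + 1 : ℤ) : ℝ)) cofinite (cocompact ℝ) :=
    Int.tendsto_coe_cofinite.comp (add_left_injective 1).tendsto_cofinite
  have hRL := ((tendsto_intervalIntegral_exp_mul_smul_cocompact
    (fun θ => ψ θ • F (Complex.exp (Complex.I * θ))) (neg_le_self Real.pi_pos.le)).comp
      hshift).const_smul (1 / (2 * Real.pi) : ℝ)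
  rw [smul_zero] at hRL
  refine hRL.congr fun n => ?_
  simp [hidentity n, mul_smul]
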